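/- If δ is a dissimilarity map quartet consistent with a binary phylogenetic X-tree T and (a,b) is a cherry of T, then b is visible from a with respect to δ; that is, b uniquely maximizes Z_δ(a,x) over all x ≠ a. -/

import Mathlib

open Finset
open scoped Classical

/-- `w_δ(ij:kl) = (1/2)(δ(i,k)+δ(i,l)+δ(j,k)+δ(j,l)) - δ(i,j) - δ(k,l)`. -/
noncomputable def njw {X : Type*} (δ : X → X → ℝ) (i j k l : X) : ℝ :=
  (δ i k + δ i l + δ j k + δ j l) / 2 - δ i j - δ k l

/-- Edge `e` (with split side `σ e`) separates the pair `p,q` from the pair `r,s`. -/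
def sepE {X E : Type*} (σ : E → Finset X) (e : E) (p q r s : X) : Prop :=
  (p ∈ σ e ∧ q ∈ σ e ∧ r ∉ σ e ∧ s ∉ σ e) ∨
  (p ∉ σ e ∧ q ∉ σ e ∧ r ∈ σ e ∧ s ∈ σ e)

/-- `(ij:kl)` is a quartet of the tree encoded by the split system `σ`:
some internal edge separates `{i,j}` from `{k,l}`. -/
def isQuartet {X E : Type*} (σ : E → Finset X) (i j k l : X) : Prop :=
  ∃ e, sepE σ e i j k l

/-- Pairwise compatibility of the splits: the condition under which a split system
is exactly the split system of a (phylogenetic) tree. -/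
def splitsCompatible {X E : Type*} [Fintype X] (σ : E → Finset X) : Prop :=
  ∀ e f, σ e ⊆ σ f ∨ σ f ⊆ σ e ∨ (∀ a, a ∈ σ e → a ∉ σ f) ∨ (∀ a, a ∈ σ e ∨ a ∈ σ f)

/-- A dissimilarity map `δ` is quartet consistent with the tree encoded by `σ`. -/
def quartetConsistent {X E : Type*} (σ : E → Finset X) (δ : X → X → ℝ) : Prop :=
  ∀ i j k l : X, i ≠ j → i ≠ k → i ≠ l → j ≠ k → j ≠ l → k ≠ l →
    isQuartet σ i j k l →
      njw δ i j k l > max (njw δ i k j l) (njw δ i l j k)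

/-- The scaled Z-criterion `Z_δ(i,j) = ∑_{{k,l} ⊆ X\{i,j}} w_δ(ij:kl)`
(sum over unordered pairs, written as half the sum over ordered pairs). -/
noncomputable def njZ {X : Type*} [Fintype X] [DecidableEq X]
    (δ : X → X → ℝ) (i j : X) : ℝ :=
  (1 / 2) * ∑ k ∈ (Finset.univ.erase i).erase j,
    ∑ l ∈ ((Finset.univ.erase i).erase j).erase k, njw δ i j k l

/-- `(x,y)` is a cherry of the tree encoded by `σ`: some edge induces the split
`{x,y} | X \ {x,y}`. -/
def isCherry {X E : Type*} [Fintype X] [DecidableEq X]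
    (σ : E → Finset X) (x y : X) : Prop :=
  x ≠ y ∧ ∃ e, σ e = {x, y} ∨ σ e = ({x, y} : Finset X)ᶜ

/-!
Fix `x ∉ {a, b}`, put `S = X \ {a, b, x}` and
`g k = partnerGain δ a b x k = (δ(b,k) - δ(x,k) + δ(a,x) - δ(a,b)) / 2`.
Then `w(ab:kl) - w(ax:kl) = g k + g l` and `w(ab:xk) - w(ax:bk) = 3 g k`, so splitting off the
terms of `Z_δ(a,b)` and `Z_δ(a,x)` that involve the other partner gives
`Z_δ(a,b) - Z_δ(a,x) = (|S| + 2) ∑_{k ∈ S} g k`.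
Because `(a,b)` is a cherry, `ab|xk` is a quartet of the tree for every `k ∈ S`, and quartet
consistency makes each `g k` positive.
-/

noncomputable def partnerGain {X : Type*} (δ : X → X → ℝ) (a b x k : X) : ℝ :=
  (δ b k - δ x k + δ a x - δ a b) / 2

section PairSums

variable {α M : Type*} [DecidableEq α]

theorem sum_sum_erase_eq_of_mem [AddCommMonoid M] {A : Finset α} {x : α} (hx : x ∈ A)
    (F : α → α → M) :
    ∑ k ∈ A, ∑ l ∈ A.erase k, F k l =
      ∑ k ∈ A.erase x, ∑ l ∈ (A.erase x).erase k, F k l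
        + ∑ k ∈ A.erase x, (F k x + F x k) := by
  have inner : ∀ k ∈ A.erase x,
      ∑ l ∈ A.erase k, F k l = ∑ l ∈ (A.erase x).erase k, F k l + F k x := by
    intro k hk
    have hxk : x ∈ A.erase k := mem_erase.2 ⟨(ne_of_mem_erase hk).symm, hx⟩
    rw [← sum_erase_add _ _ hxk, erase_right_comm]
  rw [← sum_erase_add A _ hx, sum_congr rfl inner, sum_add_distrib, sum_add_distrib,
    add_assoc]

theorem sum_sum_erase_add_eq_mul_sum (S : Finset α) (g : α → ℝ) :
    ∑ k ∈ S, ∑ l ∈ S.erase k, (g k + g l) = 2 * ((#S : ℝ) - 1) * ∑ k ∈ S, g k := by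
  have inner : ∀ k ∈ S, ∑ l ∈ S.erase k, (g k + g l)
      = ((#S : ℝ) - 1) * g k + (∑ l ∈ S, g l - g k) := by
    intro k hk
    rw [sum_add_distrib, sum_const, card_erase_of_mem hk, nsmul_eq_mul,
      Nat.cast_sub (card_pos.2 ⟨k, hk⟩), Nat.cast_one, sum_erase_eq_sub hk]
  rw [sum_congr rfl inner, sum_add_distrib, sum_sub_distrib, ← mul_sum, sum_const,
    nsmul_eq_mul]
  ring

end PairSums

section Gain

variable {X : Type*} {δ : X → X → ℝ}

theorem njw_sub_njw_eq_partnerGain_add (a b x k l : X) :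
    njw δ a b k l - njw δ a x k l = partnerGain δ a b x k + partnerGain δ a b x l := by
  unfold njw partnerGain
  ring

theorem njw_sub_njw_swap_eq_three_mul_partnerGain (hsym : ∀ x y, δ x y = δ y x)
    (a b x k : X) :
    njw δ a b x k - njw δ a x b k = 3 * partnerGain δ a b x k := by
  unfold njw partnerGain
  rw [hsym x b]
  ring

theorem njw_add_njw_sub_njw_add_njw_eq_six_mul_partnerGain (hsym : ∀ x y, δ x y = δ y x)
    (a b x k : X) :
    (njw δ a b k x + njw δ a b x k) - (njw δ a x k b + njw δ a x b k) =
      6 * partnerGain δ a b x k := by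
  unfold njw partnerGain
  rw [hsym k x, hsym x b, hsym k b]
  ring

theorem partnerGain_pos {E : Type*} {σ : E → Finset X} (hsym : ∀ x y, δ x y = δ y x)
    (hqc : quartetConsistent σ δ) {a b x k : X} (hab : a ≠ b) (hax : a ≠ x) (hak : a ≠ k)
    (hbx : b ≠ x) (hbk : b ≠ k) (hxk : x ≠ k) (hq : isQuartet σ a b x k) :
    0 < partnerGain δ a b x k := by
  have hw := (le_max_left _ _).trans_lt (hqc a b x k hab hax hak hbx hbk hxk hq)
  linarith [njw_sub_njw_swap_eq_three_mul_partnerGain hsym a b x k]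

end Gain

theorem isQuartet_of_isCherry {X E : Type*} [Fintype X] [DecidableEq X] {σ : E → Finset X}
    {a b x k : X} (hcherry : isCherry σ a b) (hxa : x ≠ a) (hxb : x ≠ b) (hka : k ≠ a)
    (hkb : k ≠ b) : isQuartet σ a b x k := by
  obtain ⟨-, e, he | he⟩ := hcherry
  · exact ⟨e, Or.inl (by simp [he, hxa, hxb, hka, hkb])⟩
  · exact ⟨e, Or.inr (by simp [he, hxa, hxb, hka, hkb])⟩

section Criterion

variable {X : Type*} [Fintype X] [DecidableEq X] {δ : X → X → ℝ}

theorem njZ_sub_njZ_eq (hsym : ∀ x y, δ x y = δ y x) {a b x : X}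
    (hab : a ≠ b) (hax : a ≠ x) (hbx : b ≠ x) :
    njZ δ a b - njZ δ a x = ((#(univ \ {a, b, x}) : ℝ) + 2) *
      ∑ k ∈ univ \ {a, b, x}, partnerGain δ a b x k := by
  set S := univ \ {a, b, x}
  have hxA : x ∈ (univ.erase a).erase b := by simp [hax.symm, hbx.symm]
  have hbB : b ∈ (univ.erase a).erase x := by simp [hab.symm, hbx]
  have hA : ((univ.erase a).erase b).erase x = S := by ext; simp [S]; tauto
  have hB : ((univ.erase a).erase x).erase b = S := by rw [erase_right_comm, hA]
  unfold njZ
  rw [sum_sum_erase_eq_of_mem hxA, sum_sum_erase_eq_of_mem hbB, hA, hB]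
  have pairs : ∑ k ∈ S, ∑ l ∈ S.erase k, njw δ a b k l
      - ∑ k ∈ S, ∑ l ∈ S.erase k, njw δ a x k l
      = 2 * ((#S : ℝ) - 1) * ∑ k ∈ S, partnerGain δ a b x k := by
    simp only [← sum_sub_distrib, njw_sub_njw_eq_partnerGain_add, sum_sum_erase_add_eq_mul_sum]
  have withPartner : ∑ k ∈ S, (njw δ a b k x + njw δ a b x k)
      - ∑ k ∈ S, (njw δ a x k b + njw δ a x b k)
      = 6 * ∑ k ∈ S, partnerGain δ a b x k := by
    simp only [← sum_sub_distrib, njw_add_njw_sub_njw_add_njw_eq_six_mul_partnerGain hsym,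
      mul_sum]
  linear_combination (1 / 2 : ℝ) * (pairs + withPartner)

end Criterion

theorem statement_9_general {X E : Type*} [Fintype X] [DecidableEq X]
    (hn : 4 ≤ Fintype.card X)
    (σ : E → Finset X)
    (δ : X → X → ℝ)
    (hsym : ∀ x y, δ x y = δ y x)
    (hqc : quartetConsistent σ δ)
    (a b : X) (hcherry : isCherry σ a b) :
    ∀ x : X, x ≠ a → x ≠ b → njZ δ a b > njZ δ a x := by
  intro x hxa hxb
  have hab := hcherry.1
  have hS : (univ \ {a, b, x}).Nonempty := by
    rw [← card_pos]
    have hcard := card_univ (α := X)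
    have hsplit := card_le_card_sdiff_add_card (s := univ) (t := {a, b, x})
    have hthree := card_le_three (a := a) (b := b) (c := x)
    omega
  have hgain : ∀ k ∈ univ \ {a, b, x}, 0 < partnerGain δ a b x k := by
    intro k hk
    simp only [mem_sdiff, mem_univ, mem_insert, mem_singleton, true_and, not_or] at hk
    obtain ⟨hka, hkb, hkx⟩ := hk
    exact partnerGain_pos hsym hqc hab hxa.symm (Ne.symm hka) hxb.symm (Ne.symm hkb)
      (Ne.symm hkx) (isQuartet_of_isCherry hcherry hxa hxb hka hkb)
  have hdiff := njZ_sub_njZ_eq hsym hab hxa.symm hxb.symm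
  have hprod := mul_pos (by positivity : (0 : ℝ) < #(univ \ {a, b, x}) + 2) (sum_pos hgain hS)
  linarith

/-- Visibility: if `δ` is quartet consistent with the tree `σ` and `(a,b)`
is a cherry, then `b` uniquely maximizes `Z_δ(a,·)`: `Z_δ(a,b) > Z_δ(a,x)` for all
`x ∉ {a,b}`. -/
theorem statement_9 {X E : Type*} [Fintype X] [DecidableEq X]
    (hn : 4 ≤ Fintype.card X)
    (σ : E → Finset X)
    (hcompat : splitsCompatible σ)
    (hnontriv : ∀ e, (σ e).Nonempty ∧ σ e ≠ Finset.univ)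
    (δ : X → X → ℝ)
    (hsym : ∀ x y, δ x y = δ y x) (hdiag : ∀ x, δ x x = 0)
    (hqc : quartetConsistent σ δ)
    (a b : X) (hcherry : isCherry σ a b) :
    ∀ x : X, x ≠ a → x ≠ b → njZ δ a b > njZ δ a x :=
  statement_9_general hn σ δ hsym hqc a b hcherry
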